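/- arXiv:math/0503740 — 4 statements merged into one kernel-verified Lean document; each statement's English description precedes it below -/
import Mathlib

section
/- Let A be a polynomial ring over a field k with irrelevant maximal ideal m, let I ⊆ A be a homogeneous ideal with I ≠ (I : m), let l be a linear form such that (I : l)/I has finite length, and let q be the smallest integer with (I : l^∞) = (I : l^q). Then q ≤ a_0(A/I) − indeg(I^sat) + 1, where a_0(A/I) is the largest degree μ with H^0_m(A/I)_μ ≠ 0 and indeg(I^sat) is the smallest degree of a nonzero element of the saturation I^sat = ∪_{j>0}(I : m^j). -/
open MvPolynomial

noncomputable section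

/-- The standard graded polynomial ring `k[X_0, …, X_{N-1}]`. -/
abbrev PolyRing (k : Type) [Field k] (N : ℕ) := MvPolynomial (Fin N) k

variable {k : Type} [Field k] {N : ℕ}

/-- The irrelevant maximal ideal `(X_0, …, X_{N-1})`. -/
def irrel (k : Type) [Field k] (N : ℕ) : Ideal (PolyRing k N) :=
  Ideal.span (Set.range MvPolynomial.X)

/-- An ideal generated by homogeneous elements. -/
def IsHomogIdeal (I : Ideal (PolyRing k N)) : Prop :=
  ∃ G : Set (PolyRing k N), (∀ g ∈ G, ∃ d, MvPolynomial.IsHomogeneous g d) ∧ I = Ideal.span G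

/-- The saturation `I^sat = ∪_j (I : m^j)` of a homogeneous ideal. -/
def satIdeal (I : Ideal (PolyRing k N)) : Ideal (PolyRing k N) :=
  ⨆ j : ℕ, Submodule.colon I ((irrel k N ^ j : Ideal (PolyRing k N)) : Set (PolyRing k N))

namespace Lemma12Aux
open Finset


variable {k : Type} [Field k] {N : ℕ}


/-- Key product formula (as membership): if all the relevant products of homogeneous
components lie in `I`, so does the `d`-th component of the product. -/
lemma comp_mul_mem (I : Ideal (PolyRing k N)) (p t : PolyRing k N) (d : ℕ)
    (h : ∀ i e, i + e = d →
      homogeneousComponent i p * homogeneousComponent e t ∈ I) :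
    homogeneousComponent d (p * t) ∈ I := by
  have expand : homogeneousComponent d (p * t) =
      ∑ i ∈ range (p.totalDegree + 1), ∑ e ∈ range (t.totalDegree + 1),
        homogeneousComponent d (homogeneousComponent i p * homogeneousComponent e t) := by
    conv_lhs => rw [← sum_homogeneousComponent p, ← sum_homogeneousComponent t,
      Finset.sum_mul_sum, map_sum]
    exact Finset.sum_congr rfl fun i _ => map_sum _ _ _
  rw [expand]
  refine Submodule.sum_mem _ fun i _ => Submodule.sum_mem _ fun e _ => ?_
  have hh : homogeneousComponent i p * homogeneousComponent e t ∈
      homogeneousSubmodule (Fin N) k (i + e) :=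
    (mem_homogeneousSubmodule _ _).2
      ((homogeneousComponent_isHomogeneous i p).mul (homogeneousComponent_isHomogeneous e t))
  rw [homogeneousComponent_of_mem hh]
  split_ifs with hd
  · exact h i e hd.symm
  · exact I.zero_mem

/-- Component of product with a homogeneous polynomial. -/
lemma comp_mul_homog (p t : PolyRing k N) (n d : ℕ) (hp : p.IsHomogeneous n) :
    homogeneousComponent (n + d) (p * t) = p * homogeneousComponent d t := by
  conv_lhs => rw [← sum_homogeneousComponent t, Finset.mul_sum, map_sum]
  have key : ∀ e, homogeneousComponent (n + d) (p * homogeneousComponent e t) =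
      if e = d then p * homogeneousComponent e t else 0 := by
    intro e
    have hh : p * homogeneousComponent e t ∈ homogeneousSubmodule (Fin N) k (n + e) :=
      (mem_homogeneousSubmodule _ _).2 (hp.mul (homogeneousComponent_isHomogeneous e t))
    rw [homogeneousComponent_of_mem hh]
    by_cases he : e = d
    · subst he; simp
    · rw [if_neg (by omega), if_neg he]
  rw [Finset.sum_congr rfl fun e _ => key e, Finset.sum_ite_eq' _ d
    (fun e => p * homogeneousComponent e t)]
  split_ifs with hd
  · rfl
  · rw [homogeneousComponent_eq_zero, mul_zero]
    simpa using hd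

/-- A homogeneously generated ideal is closed under homogeneous components. -/
lemma comp_closed {I : Ideal (PolyRing k N)}
    (hhom : ∃ G : Set (PolyRing k N), (∀ g ∈ G, ∃ d, MvPolynomial.IsHomogeneous g d) ∧
      I = Ideal.span G) :
    ∀ x ∈ I, ∀ d, homogeneousComponent d x ∈ I := by
  obtain ⟨G, hG, rfl⟩ := hhom
  intro x hx
  induction hx using Submodule.span_induction with
  | mem g hg =>
    intro d
    obtain ⟨e, he⟩ := hG g hg
    rw [homogeneousComponent_of_mem ((mem_homogeneousSubmodule _ _).2 he)]
    split_ifs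
    · exact Ideal.subset_span hg
    · exact Submodule.zero_mem _
  | zero => intro d; simp
  | add x y hx hy ihx ihy => intro d; rw [map_add]; exact add_mem (ihx d) (ihy d)
  | smul a x hx ih =>
    intro d
    rw [smul_eq_mul]
    exact comp_mul_mem _ a x d fun i e hie => Ideal.mul_mem_left _ _ (ih e)

/-- Colon by a homogeneous element is closed under homogeneous components. -/
lemma colon_comp_closed {I : Ideal (PolyRing k N)}
    (hI : ∀ x ∈ I, ∀ d, homogeneousComponent d x ∈ I)
    {w : PolyRing k N} {n : ℕ} (hw : w.IsHomogeneous n) {x : PolyRing k N}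
    (hx : x ∈ Submodule.colon I (Ideal.span {w})) (d : ℕ) :
    homogeneousComponent d x ∈ Submodule.colon I (Ideal.span {w}) := by
  rw [Ideal.mem_colon_span_singleton] at hx ⊢
  have h1 : w * x ∈ I := by rwa [mul_comm]
  have h2 := hI _ h1 (n + d)
  rw [comp_mul_homog w x n d hw] at h2
  rwa [mul_comm]

/-- Descent: if `t - b*t ∈ I` with `b` of zero constant component and `I`
closed under homogeneous components, then `t ∈ I`. -/
lemma descent {I : Ideal (PolyRing k N)}
    (hI : ∀ x ∈ I, ∀ d, homogeneousComponent d x ∈ I)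
    {b t : PolyRing k N} (hb : homogeneousComponent 0 b = 0) (h : t - b * t ∈ I) : t ∈ I := by
  have key : ∀ d, homogeneousComponent d t ∈ I := by
    intro d
    induction d using Nat.strong_induction_on with
    | _ d ih =>
      have h1 : homogeneousComponent d (t - b * t) ∈ I := hI _ h d
      have h2 : homogeneousComponent d (b * t) ∈ I := by
        refine comp_mul_mem _ b t d fun i e hie => ?_
        rcases Nat.eq_zero_or_pos i with hi | hi
        · subst hi; rw [hb, zero_mul]; exact I.zero_mem
        · exact Ideal.mul_mem_left _ _ (ih e (by omega))
      have : homogeneousComponent d t =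
          homogeneousComponent d (t - b * t) + homogeneousComponent d (b * t) := by
        rw [map_sub]; ring
      rw [this]; exact add_mem h1 h2
  rw [← sum_homogeneousComponent t]
  exact Submodule.sum_mem _ fun i _ => key i




lemma constcomp_zero {b : PolyRing k N} (hb : b ∈ irrel k N) :
    homogeneousComponent 0 b = 0 := by
  have hker : irrel k N ≤ RingHom.ker (constantCoeff (R := k) (σ := Fin N)) := by
    rw [irrel, Ideal.span_le]
    rintro _ ⟨i, rfl⟩
    simp [RingHom.mem_ker]
  have h0 : constantCoeff b = 0 := hker hb
  rw [homogeneousComponent_zero]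
  rw [show coeff 0 b = constantCoeff b from rfl, h0, map_zero]

set_option synthInstance.maxHeartbeats 1000000 in
set_option maxHeartbeats 2000000 in
/-- From finite length of `(I:l)/I` we get `m^n (I : l) ⊆ I` for some `n`. -/
lemma sat_key (I : Ideal (PolyRing k N))
    (hI : ∀ x ∈ I, ∀ d, homogeneousComponent d x ∈ I) (l : PolyRing k N)
    (hlen : IsFiniteLength (PolyRing k N ⧸ I)
      (Ideal.map (Ideal.Quotient.mk I) (Submodule.colon I (Ideal.span {l})))) :
    ∃ n : ℕ, irrel k N ^ n * Submodule.colon I (Ideal.span {l}) ≤ I := by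
  set M : Ideal (PolyRing k N ⧸ I) := Ideal.map (Ideal.Quotient.mk I) (Submodule.colon I (Ideal.span {l})) with hM
  set 𝔪 : Ideal (PolyRing k N ⧸ I) := Ideal.map (Ideal.Quotient.mk I) (irrel k N) with hm
  haveI hart : IsArtinian (PolyRing k N ⧸ I) M := (isFiniteLength_iff_isNoetherian_isArtinian.mp hlen).2
  have mono : Monotone (fun j : ℕ => OrderDual.toDual (𝔪 ^ j • (⊤ : Submodule (PolyRing k N ⧸ I) M))) := by
    intro i j hij
    exact Submodule.smul_mono_left (Ideal.pow_le_pow_right hij)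
  obtain ⟨n, hn⟩ := IsArtinian.monotone_stabilizes (R := PolyRing k N ⧸ I) (M := M) ⟨_, mono⟩
  have hstab : 𝔪 ^ n • (⊤ : Submodule (PolyRing k N ⧸ I) M) = 𝔪 ^ (n + 1) • (⊤ : Submodule (PolyRing k N ⧸ I) M) :=
    congrArg OrderDual.ofDual (hn (n + 1) (Nat.le_succ n))
  -- map down to ideals of R
  have hmap : ∀ j : ℕ, Submodule.map M.subtype (𝔪 ^ j • (⊤ : Submodule (PolyRing k N ⧸ I) M)) =
      𝔪 ^ j • (M : Submodule (PolyRing k N ⧸ I) (PolyRing k N ⧸ I)) := by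
    intro j
    rw [Submodule.map_smul'', Submodule.map_subtype_top]
  have hstab' : 𝔪 ^ n • (M : Submodule (PolyRing k N ⧸ I) (PolyRing k N ⧸ I)) = 𝔪 ^ (n + 1) • (M : Submodule (PolyRing k N ⧸ I) (PolyRing k N ⧸ I)) := by
    rw [← hmap, ← hmap, hstab]
  set P : Ideal (PolyRing k N ⧸ I) := 𝔪 ^ n • (M : Submodule (PolyRing k N ⧸ I) (PolyRing k N ⧸ I)) with hP
  have hPle : P ≤ 𝔪 • P := by
    conv_lhs => rw [hstab']
    rw [show 𝔪 ^ (n + 1) = 𝔪 * 𝔪 ^ n from pow_succ' 𝔪 n, ← Ideal.smul_eq_mul 𝔪 (𝔪 ^ n), Submodule.smul_assoc, ← hP]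
  have hfg : P.FG := IsNoetherian.noetherian P
  obtain ⟨r, hr1, hr0⟩ :=
    Submodule.exists_sub_one_mem_and_smul_eq_zero_of_fg_of_le_smul 𝔪 P hfg hPle
  have ha : (1 : PolyRing k N ⧸ I) - r ∈ 𝔪 := by
    have := 𝔪.neg_mem hr1
    simpa using this
  obtain ⟨b, hb, hba⟩ := Ideal.mem_map_iff_of_surjective _
    Ideal.Quotient.mk_surjective |>.mp ha
  refine ⟨n, ?_⟩
  intro t ht
  have h1 : Ideal.Quotient.mk I t ∈ P := by
    have hmapT : Ideal.map (Ideal.Quotient.mk I)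
        (irrel k N ^ n * Submodule.colon I (Ideal.span {l})) = P := by
      rw [Ideal.map_mul, Ideal.map_pow, hP, Ideal.smul_eq_mul]
    exact hmapT ▸ Ideal.mem_map_of_mem _ ht
  have h2 : t - b * t ∈ I := by
    rw [← Ideal.Quotient.eq_zero_iff_mem, map_sub, map_mul, hba]
    have h0 : r * (Ideal.Quotient.mk I t) = 0 := by simpa [smul_eq_mul] using hr0 _ h1
    linear_combination h0
  exact descent hI (constcomp_zero hb) h2

lemma colon_pow_le (I : Ideal (PolyRing k N)) (l : PolyRing k N) (n : ℕ)
    (hn : irrel k N ^ n * Submodule.colon I (Ideal.span {l}) ≤ I) (j : ℕ) :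
    Submodule.colon I (Ideal.span {l ^ j}) ≤ Submodule.colon I (((irrel k N) ^ (n * j) : Ideal (PolyRing k N)) : Set (PolyRing k N)) := by
  induction j with
  | zero =>
    intro x hx
    rw [Ideal.mem_colon_span_singleton, pow_zero, mul_one] at hx
    rw [Submodule.mem_colon]
    intro p _
    rw [smul_eq_mul]
    exact Ideal.mul_mem_right p I hx
  | succ j ih =>
    intro x hx
    rw [Ideal.mem_colon_span_singleton] at hx
    have hlx : l * x ∈ Submodule.colon I (Ideal.span {l ^ j}) := by
      rw [Ideal.mem_colon_span_singleton]
      have e : l * x * l ^ j = x * l ^ (j + 1) := by ring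
      rw [e]; exact hx
    have h2 := ih hlx
    rw [Submodule.mem_colon] at h2 ⊢
    intro p hp
    rw [show n * (j + 1) = n * j + n by ring, pow_add] at hp
    rw [smul_eq_mul]
    refine Submodule.mul_induction_on hp ?_ ?_
    · intro a ha b hb
      have hax : a * x ∈ Submodule.colon I (Ideal.span {l}) := by
        rw [Ideal.mem_colon_span_singleton]
        have h3 := h2 a ha
        rw [smul_eq_mul] at h3
        have e : a * x * l = l * x * a := by ring
        rw [e]; exact h3
      have h4 : b * (a * x) ∈ irrel k N ^ n * Submodule.colon I (Ideal.span {l}) :=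
        Ideal.mul_mem_mul hb hax
      have e2 : x * (a * b) = b * (a * x) := by ring
      rw [e2]; exact hn h4
    · intro y z hy hz
      rw [mul_add]; exact add_mem hy hz

end Lemma12Aux

/-- Lemma 1.2: if `I ≠ (I : m)`, `l` is a linear form with `(I : l)/I` of finite
length, and `q` is the smallest integer with `I : l^∞ = I : l^q`, then
`q ≤ a₀(A/I) - indeg(I^sat) + 1`.  Here `a₀` is the largest degree of a nonzero
homogeneous element of `H⁰_m(A/I) = I^sat/I` and `indeg(I^sat)` the smallest degree
of a nonzero homogeneous element of `I^sat`. -/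
theorem lemma_1_2 {k : Type} [Field k] (m : ℕ)
    (I : Ideal (PolyRing k (m + 2))) (hhom : IsHomogIdeal I)
    (hIm : I ≠ Submodule.colon I (irrel k (m + 2)))
    (l : PolyRing k (m + 2)) (hl : MvPolynomial.IsHomogeneous l 1)
    (hlen : IsFiniteLength (PolyRing k (m + 2) ⧸ I)
      (Ideal.map (Ideal.Quotient.mk I) (Submodule.colon I (Ideal.span {l}))))
    (q : ℕ)
    (hq : Submodule.colon I (Ideal.span {l ^ q}) =
      ⨆ j : ℕ, Submodule.colon I (Ideal.span {l ^ j}))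
    (hqmin : ∀ q' : ℕ, Submodule.colon I (Ideal.span {l ^ q'}) =
      (⨆ j : ℕ, Submodule.colon I (Ideal.span {l ^ j})) → q ≤ q')
    (a0 : ℕ)
    (ha0 : ∃ f : PolyRing k (m + 2), f.IsHomogeneous a0 ∧ f ∈ satIdeal I ∧ f ∉ I)
    (ha0max : ∀ (μ : ℕ) (f : PolyRing k (m + 2)),
      f.IsHomogeneous μ → f ∈ satIdeal I → f ∉ I → μ ≤ a0)
    (i0 : ℕ)
    (hi0 : ∃ f : PolyRing k (m + 2), f ≠ 0 ∧ f.IsHomogeneous i0 ∧ f ∈ satIdeal I)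
    (hi0min : ∀ (μ : ℕ) (f : PolyRing k (m + 2)),
      f ≠ 0 → f.IsHomogeneous μ → f ∈ satIdeal I → i0 ≤ μ) :
    (q : ℤ) ≤ (a0 : ℤ) - (i0 : ℤ) + 1 := by
  have hI : ∀ x ∈ I, ∀ d, homogeneousComponent d x ∈ I := Lemma12Aux.comp_closed hhom
  obtain ⟨n, hn⟩ := Lemma12Aux.sat_key I hI l hlen
  have hi0a0 : i0 ≤ a0 := by
    obtain ⟨f, hf, hfs, hfn⟩ := ha0
    exact hi0min a0 f (fun h0 => hfn (by rw [h0]; exact I.zero_mem)) hf hfs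
  rcases Nat.eq_zero_or_pos q with hq0 | hq1
  · omega
  have hne : Submodule.colon I (Ideal.span {l ^ (q - 1)}) ≠
      Submodule.colon I (Ideal.span {l ^ q}) := by
    intro h
    have := hqmin (q - 1) (h.trans hq)
    omega
  have hle : Submodule.colon I (Ideal.span {l ^ (q - 1)}) ≤
      Submodule.colon I (Ideal.span {l ^ q}) := by
    intro x hx
    rw [Ideal.mem_colon_span_singleton] at hx ⊢
    have e : x * l ^ q = l * (x * l ^ (q - 1)) := by
      conv_lhs => rw [show q = (q - 1) + 1 by omega]
      rw [pow_succ]; ring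
    rw [e]; exact I.mul_mem_left l hx
  obtain ⟨x, hxq, hxq1⟩ := SetLike.exists_of_lt (lt_of_le_of_ne hle hne)
  have hcomp : ∃ d, homogeneousComponent d x ∉
      Submodule.colon I (Ideal.span {l ^ (q - 1)}) := by
    by_contra h
    push_neg at h
    apply hxq1
    rw [← sum_homogeneousComponent x]
    exact Submodule.sum_mem _ fun i _ => h i
  obtain ⟨d, hd⟩ := hcomp
  set g := homogeneousComponent d x with hg
  have hgq : g ∈ Submodule.colon I (Ideal.span {l ^ q}) :=
    Lemma12Aux.colon_comp_closed hI (hl.pow q) hxq d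
  have hg_sat : g ∈ satIdeal I := by
    have h1 : g ∈ Submodule.colon I ((irrel k (m + 2) ^ (n * q) : Ideal (PolyRing k (m + 2))) : Set (PolyRing k (m + 2))) :=
      Lemma12Aux.colon_pow_le I l n hn q hgq
    exact (le_iSup (fun j : ℕ => Submodule.colon I ((irrel k (m + 2) ^ j : Ideal (PolyRing k (m + 2))) : Set (PolyRing k (m + 2)))) (n * q)) h1
  have hg_ne : g ≠ 0 := fun h0 => hd (by rw [h0]; exact Submodule.zero_mem _)
  have hg_hom : g.IsHomogeneous d := homogeneousComponent_isHomogeneous d x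
  have hi0d : i0 ≤ d := hi0min d g hg_ne hg_hom hg_sat
  have hh_hom : (l ^ (q - 1) * g).IsHomogeneous (q - 1 + d) := by
    have h5 := (hl.pow (q - 1)).mul hg_hom
    rwa [one_mul] at h5
  have hh_sat : l ^ (q - 1) * g ∈ satIdeal I := Ideal.mul_mem_left _ _ hg_sat
  have hh_not : l ^ (q - 1) * g ∉ I := by
    intro hmem
    apply hd
    rw [← hg] at *
    rw [Ideal.mem_colon_span_singleton]
    rwa [mul_comm] at hmem
  have hfin : q - 1 + d ≤ a0 := ha0max _ _ hh_hom hh_sat hh_not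
  omega
end
end

section
/- Let k be a field, n ≥ 1, m ≥ 1, and suppose x_1, y_2, …, y_{m+1} are nonzero elements of k satisfying y_i^{n+1} = y_{i+1}^n for 2 ≤ i ≤ m, together with f_{m−1}(y_2,…,y_{m+1}) = x_1 (with f as in the recursive definition, f_0 meaning y_2 = x_1 when m = 1). Then y_i = x_1^{n^{m−i+1}(n+1)^{i−2}} for all 2 ≤ i ≤ m+1. -/
noncomputable section

/-- The rational functions `f_m` defined recursively by `f_0(a) = a` (so that
`f_1(X₂, X₃) = X₃ / X₂`) and `f_m(X₂, …, X_{m+2}) = f_{m-1}(X₃/X₂, …, X_{m+2}/X_{m+1})`. -/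
def fm {K : Type} [Field K] : (m : ℕ) → (Fin (m + 1) → K) → K
  | 0, a => a 0
  | (m + 1), a => fm m (fun i => a i.succ / a i.castSucc)

lemma stmt7_aux {k : Type} [Field k] (n : ℕ) (x1 : k) :
    ∀ (m : ℕ) (y : ℕ → k), (∀ t < m + 1, y t ≠ 0) →
    (∀ t, t + 2 ≤ m + 1 → y t ^ (n + 1) = y (t + 1) ^ n) →
    fm m (fun i : Fin (m + 1) => y i) = x1 →
    ∀ t < m + 1, y t = x1 ^ (n ^ (m - t) * (n + 1) ^ t) := by
  intro m
  induction m with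
  | zero =>
    intro y hy hrel hf t ht
    interval_cases t
    simpa [fm] using hf
  | succ m ih =>
    intro y hy hrel hf
    set z : ℕ → k := fun t => y (t + 1) / y t with hz
    have hzny : ∀ t < m + 1, z t ^ n = y t := by
      intro t ht
      have h1 : z t ^ n = y (t + 1) ^ n / y t ^ n := div_pow _ _ n
      rw [h1, ← hrel t (by omega), pow_succ]
      exact mul_div_cancel_left₀ _ (pow_ne_zero n (hy t (by omega)))
    have hzne : ∀ t < m + 1, z t ≠ 0 := fun t ht =>
      div_ne_zero (hy (t + 1) (by omega)) (hy t (by omega))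
    have hzrel : ∀ t, t + 2 ≤ m + 1 → z t ^ (n + 1) = z (t + 1) ^ n := by
      intro t ht
      show (y (t + 1) / y t) ^ (n + 1) = (y (t + 1 + 1) / y (t + 1)) ^ n
      rw [div_pow, div_pow, hrel t (by omega), ← hrel (t + 1) (by omega)]
    have hzf : fm m (fun i : Fin (m + 1) => z i) = x1 := by
      rw [← hf]
      show fm m _ = fm m (fun i : Fin (m + 1) =>
        (fun j : Fin (m + 2) => y j) i.succ / (fun j : Fin (m + 2) => y j) i.castSucc)
      congr 1
    have ihz := ih z hzne hzrel hzf
    intro t ht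
    rcases Nat.lt_or_ge t (m + 1) with h | h
    · rw [← hzny t h, ihz t h, ← pow_mul]
      congr 1
      have h2 : m + 1 - t = (m - t) + 1 := by omega
      rw [h2, pow_succ]
      ring
    · have ht' : t = m + 1 := by omega
      subst ht'
      have h1 : y (m + 1) = z m ^ (n + 1) := by
        have h2 : z m * y m = y (m + 1) := div_mul_cancel₀ _ (hy m (by omega))
        rw [← h2, ← hzny m (by omega), pow_succ, mul_comm]
      rw [h1, ihz m (by omega), ← pow_mul]
      congr 1
      simp [Nat.sub_self, pow_succ]

/-- If `y_2, …, y_{m+1}` (here `y t = y_{t+2}`, `0 ≤ t < m`) are nonzero elements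
of a field with `y_i^{n+1} = y_{i+1}^n` for `2 ≤ i ≤ m-1+1` and
`f_{m-1}(y_2, …, y_{m+1}) = x_1`, then `y_i = x_1^{n^{m-i+1} (n+1)^{i-2}}` for
`2 ≤ i ≤ m+1`. -/
theorem stmt7 {k : Type} [Field k] (m n : ℕ) (hm : 1 ≤ m) (hn : 1 ≤ n)
    (x1 : k) (hx1 : x1 ≠ 0) (y : ℕ → k) (hy : ∀ t < m, y t ≠ 0)
    (hrel : ∀ t, t + 2 ≤ m → y t ^ (n + 1) = y (t + 1) ^ n)
    (hf : fm (m - 1) (fun i : Fin (m - 1 + 1) => y i) = x1) :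
    ∀ t < m, y t = x1 ^ (n ^ (m - t - 1) * (n + 1) ^ t) := by
  obtain ⟨m', rfl⟩ : ∃ m', m = m' + 1 := ⟨m - 1, by omega⟩
  intro t ht
  have h := stmt7_aux n x1 m' y hy hrel hf t ht
  have e : m' + 1 - t - 1 = m' - t := by omega
  rw [e]
  exact h
end
end

section
/- Let x = (1 : x_1 : x_2 : … : x_{m+2}) be a point of P^{m+2}_k with all coordinates nonzero satisfying x_i^{n+1} = x_{i+1}^n for 2 ≤ i ≤ m+1 and x_1 = f_m(x_2,…,x_{m+2}). Then x_i = x_1^{n^{m−i+2}(n+1)^{i−2}} for 2 ≤ i ≤ m+1 and x_{m+2} = x_1^{(n+1)^m}; in particular x lies on the monomial curve C'_{m,n} parametrized by (1 : t : t^{n^m} : t^{n^{m−1}(n+1)} : … : t^{(n+1)^m}). -/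
noncomputable section

lemma fm_aux {k : Type} [Field k] (n : ℕ) :
    ∀ m (x1 : k) (x : ℕ → k), (∀ t ≤ m, x t ≠ 0) →
    (∀ t, t + 1 ≤ m → x t ^ (n + 1) = x (t + 1) ^ n) →
    x1 = fm m (fun i : Fin (m + 1) => x i) →
    ∀ t ≤ m, x t = x1 ^ (n ^ (m - t) * (n + 1) ^ t) := by
  intro m
  induction m with
  | zero =>
    intro x1 x hx hrel hf t ht
    interval_cases t
    simp only [fm] at hf
    simp [hf]
  | succ m ih =>
    intro x1 x hx hrel hf t ht
    set z : ℕ → k := fun t => x (t + 1) / x t with hzdef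
    have hzx : ∀ t ≤ m, z t ^ n = x t := by
      intro t ht
      have hxt : x t ≠ 0 := hx t (by omega)
      have hr := hrel t (by omega)
      have : z t ^ n = x (t + 1) ^ n / x t ^ n := div_pow _ _ _
      rw [this, ← hr, pow_succ]
      exact mul_div_cancel_left₀ _ (pow_ne_zero _ hxt)
    have hzz : ∀ t ≤ m, z t ^ (n + 1) = x (t + 1) := by
      intro t ht
      have hxt : x t ≠ 0 := hx t (by omega)
      rw [pow_succ, hzx t ht]
      simp only [hzdef]
      field_simp [hzdef]
    have hz0 : ∀ t ≤ m, z t ≠ 0 := fun t ht =>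
      div_ne_zero (hx (t + 1) (by omega)) (hx t (by omega))
    have hzrel : ∀ t, t + 1 ≤ m → z t ^ (n + 1) = z (t + 1) ^ n := by
      intro t ht
      rw [hzz t (by omega), hzx (t + 1) (by omega)]
    have hf' : x1 = fm m (fun i : Fin (m + 1) => z i) := by
      rw [hf]; rfl
    have hzval := ih x1 z hz0 hzrel hf'
    rcases Nat.lt_or_ge t (m + 1) with h | h
    · have ht' : t ≤ m := by omega
      rw [← hzx t ht', hzval t ht', ← pow_mul]
      congr 1
      have h1 : m + 1 - t = (m - t) + 1 := by omega
      rw [h1]; ring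
    · have ht' : t = m + 1 := by omega
      subst ht'
      rw [← hzz m le_rfl, hzval m le_rfl, ← pow_mul]
      simp [pow_succ]

/-- If `(1 : x_1 : x_2 : … : x_{m+2})` has all coordinates nonzero (here
`x t = x_{t+2}` for `0 ≤ t ≤ m`), `x_i^{n+1} = x_{i+1}^n` for `2 ≤ i ≤ m+1` and
`x_1 = f_m(x_2, …, x_{m+2})`, then `x_i = x_1^{n^{m-i+2}(n+1)^{i-2}}` for
`2 ≤ i ≤ m+1` and `x_{m+2} = x_1^{(n+1)^m}`; in particular the point lies on the
monomial curve `C'_{m,n}` parametrized by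
`t ↦ (1 : t : t^{n^m} : … : t^{(n+1)^m})` (at the value `t = x_1`). -/
theorem stmt8 {k : Type} [Field k] (m n : ℕ) (hm : 1 ≤ m) (hn : 1 ≤ n)
    (x1 : k) (hx1 : x1 ≠ 0) (x : ℕ → k) (hx : ∀ t ≤ m, x t ≠ 0)
    (hrel : ∀ t, t + 1 ≤ m → x t ^ (n + 1) = x (t + 1) ^ n)
    (hf : x1 = fm m (fun i : Fin (m + 1) => x i)) :
    ∀ t ≤ m, x t = x1 ^ (n ^ (m - t) * (n + 1) ^ t) :=
  fm_aux n m x1 x hx hrel hf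
end
end

section
/- Let b'_{m,n} be the homogeneous prime ideal of the monomial curve C'_{m,n} ⊂ P^{m+2}. The polynomial X_1^{n^m} − X_0^{n^m − 1} X_2 belongs to b'_{m,n}, and consequently reg(b'_{m,n}) ≥ n^m provided it is a minimal generator; in any case X_1^{n^m} − X_0^{n^m−1}X_2 vanishes on C'_{m,n}. -/
set_option maxHeartbeats 4000000
set_option synthInstance.maxHeartbeats 1000000


open MvPolynomial

noncomputable section

variable {k : Type} [Field k] {N : ℕ}

/-- Differential of the Koszul complex of the variables `X_0, …, X_{N-1}`
with coefficients in `A ⧸ I`, realized on functions `Finset (Fin N) → A ⧸ I`. -/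
def kosDiff (I : Ideal (PolyRing k N)) (f : Finset (Fin N) → PolyRing k N ⧸ I) :
    Finset (Fin N) → PolyRing k N ⧸ I :=
  fun S => ∑ j ∈ Sᶜ,
    (((-1 : PolyRing k N) ^ (S.filter (· < j)).card * MvPolynomial.X j) • f (insert j S))

/-- A chain supported in homological degree `p`. -/
def isSupported {M : Type} [Zero M] (p : ℕ) (f : Finset (Fin N) → M) : Prop :=
  ∀ S, S.card ≠ p → f S = 0

/-- A `p`-chain which is homogeneous of internal degree `μ`:
each component is the class of a homogeneous polynomial of degree `μ - p`. -/
def isHomogChain (I : Ideal (PolyRing k N)) (p μ : ℕ)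
    (f : Finset (Fin N) → PolyRing k N ⧸ I) : Prop :=
  ∀ S, ∃ g : PolyRing k N, g.IsHomogeneous (μ - p) ∧ f S = Ideal.Quotient.mk I g

/-- `Tor_p(A/I, k)_μ ≠ 0`, computed via the Koszul complex of the variables:
there is a homogeneous cycle of homological degree `p` and internal degree `μ`
which is not a boundary, i.e. the graded Betti number `β_{p,μ}(A/I)` is nonzero. -/
def BettiNonzero (I : Ideal (PolyRing k N)) (p μ : ℕ) : Prop :=
  p ≤ μ ∧ ∃ f : Finset (Fin N) → PolyRing k N ⧸ I,
    isSupported p f ∧ isHomogChain I p μ f ∧ kosDiff I f = 0 ∧ f ≠ 0 ∧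
    ¬ ∃ g, isSupported (p + 1) g ∧ f = kosDiff I g

/-- The Castelnuovo–Mumford regularity of `A ⧸ I`, via graded Betti numbers:
`reg (A/I) = max { μ - p | β_{p,μ}(A/I) ≠ 0 }`. -/
def regQuot (I : Ideal (PolyRing k N)) : ℤ :=
  sSup {r : ℤ | ∃ p μ, BettiNonzero I p μ ∧ r = (μ : ℤ) - p}

/-- The Castelnuovo–Mumford regularity of a proper homogeneous ideal `I`:
`reg I = reg (A/I) + 1`. -/
def regIdeal (I : Ideal (PolyRing k N)) : ℤ := regQuot I + 1


section Stmt15Aux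

variable {k : Type} [Field k] {N : ℕ}


lemma aux_smul_def (I : Ideal (PolyRing k N)) (a : PolyRing k N) (x : PolyRing k N ⧸ I) :
    a • x = Ideal.Quotient.mk I a * x := rfl

lemma aux_kosDiff_add (I : Ideal (PolyRing k N)) (f g : Finset (Fin N) → PolyRing k N ⧸ I) :
    kosDiff I (f + g) = kosDiff I f + kosDiff I g := by
  funext S
  simp only [kosDiff, Pi.add_apply, smul_add, Finset.sum_add_distrib]

lemma aux_kosDiff_smul (I : Ideal (PolyRing k N)) (r : PolyRing k N ⧸ I)
    (f : Finset (Fin N) → PolyRing k N ⧸ I) :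
    kosDiff I (r • f) = r • kosDiff I f := by
  funext S
  simp only [kosDiff, Pi.smul_apply, Finset.smul_sum, aux_smul_def, smul_eq_mul]
  rw [Finset.mul_sum]
  exact Finset.sum_congr rfl fun j _ => by ring

lemma aux_kosDiff_zero (I : Ideal (PolyRing k N)) : kosDiff I (0 : Finset (Fin N) → PolyRing k N ⧸ I) = 0 := by
  funext S; simp [kosDiff]

def auxKos (I : Ideal (PolyRing k N)) :
    (Finset (Fin N) → PolyRing k N ⧸ I) →ₗ[PolyRing k N ⧸ I] (Finset (Fin N) → PolyRing k N ⧸ I) :=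
  ⟨⟨kosDiff I, fun f g => aux_kosDiff_add I f g⟩, fun r f => aux_kosDiff_smul I r f⟩

def auxSupp (I : Ideal (PolyRing k N)) (p : ℕ) :
    Submodule (PolyRing k N ⧸ I) (Finset (Fin N) → PolyRing k N ⧸ I) where
  carrier := {f | isSupported p f}
  add_mem' := fun {f g} hf hg S hS => by
    show f S + g S = 0
    rw [hf S hS, hg S hS, add_zero]
  zero_mem' := fun S _ => rfl
  smul_mem' := fun r f hf S hS => by
    show r • f S = 0
    rw [hf S hS, smul_zero]

lemma mem_auxSupp {I : Ideal (PolyRing k N)} {p : ℕ} {f : Finset (Fin N) → PolyRing k N ⧸ I} :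
    f ∈ auxSupp I p ↔ isSupported p f := Iff.rfl

def auxEps (I : Ideal (PolyRing k N)) (i : Fin N) (z : Finset (Fin N) → PolyRing k N ⧸ I) :
    Finset (Fin N) → PolyRing k N ⧸ I :=
  fun S => if i ∈ S then ((-1 : PolyRing k N) ^ (S.filter (· < i)).card) • z (S.erase i) else 0

lemma auxEps_supported (I : Ideal (PolyRing k N)) (i : Fin N) {p : ℕ}
    {z : Finset (Fin N) → PolyRing k N ⧸ I} (hz : isSupported p z) :
    isSupported (p + 1) (auxEps I i z) := by
  intro S hS
  rw [auxEps]
  by_cases h : i ∈ S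
  · rw [if_pos h]
    have h1 : (0 : ℕ) < S.card := Finset.card_pos.2 ⟨i, h⟩
    have h2 : (S.erase i).card = S.card - 1 := Finset.card_erase_of_mem h
    rw [hz _ (by omega), smul_zero]
  · rw [if_neg h]

lemma auxHomotopy (I : Ideal (PolyRing k N)) (i : Fin N)
    (z : Finset (Fin N) → PolyRing k N ⧸ I) (hz : kosDiff I z = 0) :
    kosDiff I (auxEps I i z) = fun S => (MvPolynomial.X i : PolyRing k N) • z S := by
  funext S
  show ∑ j ∈ Sᶜ, _ = _
  by_cases hiS : i ∈ S
  · -- case i ∈ S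
    have hic : i ∉ Sᶜ := by simp [hiS]
    have hcompl : (S.erase i)ᶜ = insert i Sᶜ := by
      ext x
      simp only [Finset.mem_compl, Finset.mem_erase, Finset.mem_insert, not_and]
      constructor
      · intro h
        by_cases hx : x = i
        · exact Or.inl hx
        · exact Or.inr (fun hxS => absurd (h hx) (fun h' => h' hxS))
      · rintro (rfl | h)
        · intro h'; exact absurd rfl h'
        · intro _; intro h'; exact h h'
    have hz' := congrFun hz (S.erase i)
    rw [show kosDiff I z (S.erase i) = ∑ j ∈ (S.erase i)ᶜ,
        (((-1 : PolyRing k N) ^ ((S.erase i).filter (· < j)).card * MvPolynomial.X j) •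
          z (insert j (S.erase i))) from rfl] at hz'
    rw [hcompl, Finset.sum_insert hic] at hz'
    have hfi : (S.erase i).filter (· < i) = S.filter (· < i) := by
      ext s
      simp only [Finset.mem_filter, Finset.mem_erase]
      constructor
      · rintro ⟨⟨_, h⟩, h2⟩; exact ⟨h, h2⟩
      · rintro ⟨h, h2⟩; exact ⟨⟨ne_of_lt h2, h⟩, h2⟩
    rw [Finset.insert_erase hiS, hfi, Pi.zero_apply] at hz'
    set c := (S.filter (· < i)).card with hc
    have hsum : ∑ j ∈ Sᶜ, (((-1 : PolyRing k N) ^ ((S.erase i).filter (· < j)).card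
          * MvPolynomial.X j) • z (insert j (S.erase i)))
        = -((((-1 : PolyRing k N) ^ c * MvPolynomial.X i) • z S)) :=
      eq_neg_of_add_eq_zero_right hz'
    have key : ∀ j ∈ Sᶜ, (((-1 : PolyRing k N) ^ (S.filter (· < j)).card * MvPolynomial.X j) •
          auxEps I i z (insert j S))
        = (-((-1 : PolyRing k N) ^ c)) • ((((-1 : PolyRing k N) ^ ((S.erase i).filter (· < j)).card
            * MvPolynomial.X j) • z (insert j (S.erase i)))) := by
      intro j hj
      have hjS : j ∉ S := Finset.mem_compl.1 hj
      have hij : i ≠ j := fun h => hjS (h ▸ hiS)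
      have hiin : i ∈ insert j S := Finset.mem_insert_of_mem hiS
      have herase : (insert j S).erase i = insert j (S.erase i) :=
        Finset.erase_insert_of_ne hij.symm
      rw [auxEps, if_pos hiin, herase]
      have hfins : (insert j S).filter (· < i)
          = if j < i then insert j (S.filter (· < i)) else S.filter (· < i) := by
        rw [Finset.filter_insert]
      by_cases hlt : i < j
      · have hnjlt : ¬ j < i := fun h => absurd (lt_trans h hlt) (lt_irrefl j)
        have hcj : ((insert j S).filter (· < i)).card = c := by
          rw [hfins, if_neg hnjlt]
        have hfe : S.filter (· < j) = insert i ((S.erase i).filter (· < j)) := by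
          ext s
          simp only [Finset.mem_filter, Finset.mem_insert, Finset.mem_erase]
          constructor
          · rintro ⟨hs, hsj⟩
            by_cases hsi : s = i
            · exact Or.inl hsi
            · exact Or.inr ⟨⟨hsi, hs⟩, hsj⟩
          · rintro (rfl | ⟨⟨_, hs⟩, hsj⟩)
            · exact ⟨hiS, hlt⟩
            · exact ⟨hs, hsj⟩
        have hi_nmem : i ∉ (S.erase i).filter (· < j) := by
          simp [Finset.mem_filter, Finset.mem_erase]
        have haj : (S.filter (· < j)).card = ((S.erase i).filter (· < j)).card + 1 := by
          rw [hfe, Finset.card_insert_of_notMem hi_nmem]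
        rw [hcj, haj, smul_smul, smul_smul]
        congr 1
        rw [pow_succ]
        ring
      · have hjlt : j < i := lt_of_le_of_ne (not_lt.1 hlt) hij.symm
        have hj_nmem : j ∉ S.filter (· < i) := fun h => hjS (Finset.mem_filter.1 h).1
        have hcj : ((insert j S).filter (· < i)).card = c + 1 := by
          rw [hfins, if_pos hjlt, Finset.card_insert_of_notMem hj_nmem]
        have hfe : S.filter (· < j) = (S.erase i).filter (· < j) := by
          ext s
          simp only [Finset.mem_filter, Finset.mem_erase]
          constructor
          · rintro ⟨hs, hsj⟩
            exact ⟨⟨fun h => absurd (h ▸ hsj) hlt, hs⟩, hsj⟩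
          · rintro ⟨⟨_, hs⟩, hsj⟩; exact ⟨hs, hsj⟩
        rw [hcj, hfe, smul_smul, smul_smul]
        congr 1
        rw [pow_succ]
        ring
    rw [Finset.sum_congr rfl key, ← Finset.smul_sum, hsum]
    rw [smul_neg, neg_smul, neg_neg, smul_smul]
    rw [show ((-1 : PolyRing k N) ^ c * ((-1 : PolyRing k N) ^ c * MvPolynomial.X i))
        = MvPolynomial.X i by
      rw [← mul_assoc, ← pow_add, Even.neg_one_pow ⟨c, rfl⟩, one_mul]]
  · -- case i ∉ S
    have hic : i ∈ Sᶜ := Finset.mem_compl.2 hiS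
    rw [Finset.sum_eq_single_of_mem i hic ?side]
    case side =>
      intro j hj hji
      have : i ∉ insert j S := by
        simp only [Finset.mem_insert]
        rintro (rfl | h)
        · exact hji rfl
        · exact hiS h
      rw [auxEps, if_neg this, smul_zero]
    have h1 : (insert i S).erase i = S := Finset.erase_insert hiS
    have h2 : (insert i S).filter (· < i) = S.filter (· < i) := by
      rw [Finset.filter_insert, if_neg (lt_irrefl i)]
    rw [auxEps, if_pos (Finset.mem_insert_self i S), h1, h2, smul_smul]
    congr 1
    rw [mul_comm, ← mul_assoc, ← pow_add, Even.neg_one_pow ⟨_, rfl⟩, one_mul]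


lemma aux_degree_add (u v : Fin N →₀ ℕ) : Finsupp.degree (u + v) = Finsupp.degree u + Finsupp.degree v := by
  simp only [Finsupp.degree_eq_weight_one, map_add]

lemma aux_degree_single (j : Fin N) : Finsupp.degree (Finsupp.single j (1:ℕ)) = 1 := by
  exact Finsupp.degree_single j 1

lemma aux_comp_monomial (d : ℕ) (u : Fin N →₀ ℕ) (a : k) :
    homogeneousComponent d (monomial u a : PolyRing k N)
      = if d = u.degree then monomial u a else 0 :=
  homogeneousComponent_of_mem ((mem_homogeneousSubmodule _ _).2
    (isHomogeneous_monomial a rfl))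

lemma aux_comp_X_mul (e : ℕ) (j : Fin N) (b : PolyRing k N) :
    homogeneousComponent (e + 1) (MvPolynomial.X j * b)
      = MvPolynomial.X j * homogeneousComponent e b := by
  induction b using MvPolynomial.induction_on' with
  | monomial u a =>
    rw [show (MvPolynomial.X j : PolyRing k N) * monomial u a
        = monomial (Finsupp.single j 1 + u) a by
      rw [MvPolynomial.X, monomial_mul, one_mul]]
    rw [aux_comp_monomial, aux_comp_monomial]
    rw [aux_degree_add, aux_degree_single]
    by_cases h : e = u.degree
    · rw [if_pos (by omega), if_pos h]
      rw [MvPolynomial.X, monomial_mul, one_mul]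
    · rw [if_neg (by omega), if_neg h, mul_zero]
  | add p q hp hq =>
    rw [mul_add, map_add, map_add, hp, hq, mul_add]

def auxL (I : Ideal (PolyRing k N)) (x : PolyRing k N ⧸ I) : PolyRing k N :=
  (Ideal.Quotient.mk_surjective x).choose

lemma auxL_spec (I : Ideal (PolyRing k N)) (x : PolyRing k N ⧸ I) :
    Ideal.Quotient.mk I (auxL I x) = x :=
  (Ideal.Quotient.mk_surjective x).choose_spec

def auxPi (I : Ideal (PolyRing k N)) (e : ℕ) (x : PolyRing k N ⧸ I) : PolyRing k N ⧸ I :=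
  Ideal.Quotient.mk I (homogeneousComponent e (auxL I x))

variable {I : Ideal (PolyRing k N)}
  (hI : ∀ g ∈ I, ∀ e : ℕ, homogeneousComponent e g ∈ I)

include hI

lemma auxPi_mk (e : ℕ) (g : PolyRing k N) :
    auxPi I e (Ideal.Quotient.mk I g) = Ideal.Quotient.mk I (homogeneousComponent e g) := by
  rw [auxPi, Ideal.Quotient.eq]
  rw [← map_sub]
  exact hI _ ((Ideal.Quotient.eq).1 (auxL_spec I (Ideal.Quotient.mk I g))) e

lemma auxPi_add (e : ℕ) (x y : PolyRing k N ⧸ I) :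
    auxPi I e (x + y) = auxPi I e x + auxPi I e y := by
  obtain ⟨a, rfl⟩ := Ideal.Quotient.mk_surjective x
  obtain ⟨b, rfl⟩ := Ideal.Quotient.mk_surjective y
  rw [← map_add, auxPi_mk hI, auxPi_mk hI, auxPi_mk hI, map_add, map_add]

lemma auxPi_zero (e : ℕ) : auxPi I e (0 : PolyRing k N ⧸ I) = 0 := by
  rw [show (0 : PolyRing k N ⧸ I) = Ideal.Quotient.mk I 0 from rfl, auxPi_mk hI, map_zero, map_zero]

/-- `auxPi` as an `AddMonoidHom`. -/
def auxPiHom (e : ℕ) : (PolyRing k N ⧸ I) →+ (PolyRing k N ⧸ I) :=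
  AddMonoidHom.mk' (auxPi I e) (auxPi_add hI e)

lemma auxPi_term (a e : ℕ) (j : Fin N) (x : PolyRing k N ⧸ I) :
    auxPi I (e + 1) ((((-1 : PolyRing k N) ^ a * MvPolynomial.X j)) • x)
      = (((-1 : PolyRing k N) ^ a * MvPolynomial.X j)) • auxPi I e x := by
  obtain ⟨b, rfl⟩ := Ideal.Quotient.mk_surjective x
  have h1 : (((-1 : PolyRing k N) ^ a * MvPolynomial.X j)) • Ideal.Quotient.mk I b
      = Ideal.Quotient.mk I ((-1 : PolyRing k N) ^ a * (MvPolynomial.X j * b)) := by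
    rw [show ((-1 : PolyRing k N) ^ a * MvPolynomial.X j) • Ideal.Quotient.mk I b
        = Ideal.Quotient.mk I (((-1 : PolyRing k N) ^ a * MvPolynomial.X j)) * Ideal.Quotient.mk I b from rfl,
      ← map_mul, mul_assoc]
  rw [h1, auxPi_mk hI, auxPi_mk hI]
  have hC : ((-1 : PolyRing k N) ^ a) = MvPolynomial.C (((-1 : k)) ^ a) := by
    rw [map_pow, map_neg, map_one]
  rw [hC, homogeneousComponent_C_mul, aux_comp_X_mul]
  rw [show (MvPolynomial.C ((-1:k) ^ a) * MvPolynomial.X j) • Ideal.Quotient.mk I (homogeneousComponent e b)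
      = Ideal.Quotient.mk I ((MvPolynomial.C ((-1:k) ^ a) * MvPolynomial.X j) * homogeneousComponent e b) from rfl]
  simp only [map_mul, mul_assoc]

lemma auxPi_homog {e : ℕ} {g : PolyRing k N} (hg : g.IsHomogeneous e) :
    auxPi I e (Ideal.Quotient.mk I g) = Ideal.Quotient.mk I g := by
  rw [auxPi_mk hI, homogeneousComponent_of_mem ((mem_homogeneousSubmodule _ _).2 hg), if_pos rfl]

lemma auxPi_kos (e : ℕ) (f : Finset (Fin N) → PolyRing k N ⧸ I) :
    (fun S => auxPi I (e + 1) (kosDiff I f S)) = kosDiff I (fun S => auxPi I e (f S)) := by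
  funext S
  rw [show kosDiff I f S = ∑ j ∈ Sᶜ,
      (((-1 : PolyRing k N) ^ (S.filter (· < j)).card * MvPolynomial.X j) • f (insert j S)) from rfl]
  rw [show auxPi I (e+1) = auxPiHom hI (e+1) from rfl, map_sum]
  rw [show kosDiff I (fun S => auxPi I e (f S)) S = ∑ j ∈ Sᶜ,
      (((-1 : PolyRing k N) ^ (S.filter (· < j)).card * MvPolynomial.X j) • auxPi I e (f (insert j S))) from rfl]
  exact Finset.sum_congr rfl fun j _ => auxPi_term hI _ e j _

omit hI

lemma aux_const_decomp (g : PolyRing k N) :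
    g - MvPolynomial.C (constantCoeff g) ∈ Ideal.span (Set.range (MvPolynomial.X : Fin N → PolyRing k N)) := by
  induction g using MvPolynomial.induction_on with
  | C a => simp
  | add p q hp hq =>
    have : p + q - MvPolynomial.C (constantCoeff (p + q))
        = (p - MvPolynomial.C (constantCoeff p)) + (q - MvPolynomial.C (constantCoeff q)) := by
      rw [map_add, map_add]; ring
    rw [this]; exact Ideal.add_mem _ hp hq
  | mul_X p n hp =>
    have : p * MvPolynomial.X n - MvPolynomial.C (constantCoeff (p * MvPolynomial.X n))
        = p * MvPolynomial.X n := by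
      rw [map_mul, constantCoeff_X, mul_zero, map_zero, sub_zero]
    rw [this]
    exact Ideal.mul_mem_left _ p (Ideal.subset_span ⟨n, rfl⟩)

lemma auxVanish (I : Ideal (PolyRing k N))
    (hI : ∀ g ∈ I, ∀ e : ℕ, homogeneousComponent e g ∈ I) :
    ∃ D : ℕ, ∀ p μ : ℕ, ∀ f : Finset (Fin N) → PolyRing k N ⧸ I,
      isSupported p f → isHomogChain I p μ f → kosDiff I f = 0 → D < μ - p →
      ∃ g, isSupported (p + 1) g ∧ f = kosDiff I g := by
  classical
  have hFG : ∀ p : ℕ, (auxSupp I p ⊓ LinearMap.ker (auxKos I)).FG :=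
    fun p => IsNoetherian.noetherian _
  choose T hT using hFG
  set Dp : ℕ → ℕ := fun p => (T p).sup
    (fun t => Finset.univ.sup (fun S : Finset (Fin N) => (auxL I (t S)).totalDegree)) with hDp
  refine ⟨(Finset.range (N + 1)).sup Dp, ?_⟩
  set D := (Finset.range (N + 1)).sup Dp with hDdef
  intro p μ f hsupp hhom hcyc hD
  by_cases hpN : N < p
  · have hf0 : f = 0 := funext fun S => hsupp S (by
      have h1 : S.card ≤ N := by
        simpa using Finset.card_le_univ S
      omega)
    exact ⟨0, fun S _ => rfl, by rw [hf0, aux_kosDiff_zero]⟩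
  push_neg at hpN
  have hfZ : f ∈ auxSupp I p ⊓ LinearMap.ker (auxKos I) :=
    ⟨hsupp, LinearMap.mem_ker.2 hcyc⟩
  rw [← hT p] at hfZ
  obtain ⟨c, -, hc⟩ := Submodule.mem_span_finset.1 hfZ
  set e := μ - p with he
  have he1 : 1 ≤ e := by omega
  set Bsub := Submodule.map (auxKos I) (auxSupp I (p + 1)) with hB
  have hTZ : ∀ t ∈ T p, isSupported p t ∧ kosDiff I t = 0 := by
    intro t ht
    have h : t ∈ auxSupp I p ⊓ LinearMap.ker (auxKos I) := hT p ▸ Submodule.subset_span ht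
    exact ⟨h.1, h.2⟩
  have hXB : ∀ t ∈ T p, ∀ l : Fin N, (Ideal.Quotient.mk I (MvPolynomial.X l)) • t ∈ Bsub := by
    intro t ht l
    obtain ⟨hts, htc⟩ := hTZ t ht
    refine ⟨auxEps I l t, auxEps_supported I l hts, ?_⟩
    show kosDiff I (auxEps I l t) = _
    rw [auxHomotopy I l t htc]
    rfl
  set κ : (Finset (Fin N) → PolyRing k N ⧸ I) → PolyRing k N ⧸ I :=
    fun t => Ideal.Quotient.mk I (MvPolynomial.C (constantCoeff (auxL I (c t)))) with hκ
  have hmod : f - ∑ t ∈ T p, κ t • t ∈ Bsub := by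
    rw [← hc, ← Finset.sum_sub_distrib]
    refine Submodule.sum_mem _ fun t ht => ?_
    rw [← sub_smul]
    have h1 : c t - κ t
        = Ideal.Quotient.mk I (auxL I (c t) - MvPolynomial.C (constantCoeff (auxL I (c t)))) := by
      rw [map_sub, auxL_spec]
    rw [h1]
    obtain ⟨d, hd⟩ := (Submodule.mem_span_range_iff_exists_fun _).1 (aux_const_decomp (auxL I (c t)))
    rw [← hd, map_sum, Finset.sum_smul]
    refine Submodule.sum_mem _ fun l _ => ?_
    have h2 : (Ideal.Quotient.mk I (d l • MvPolynomial.X l)) •  t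
        = (Ideal.Quotient.mk I (d l)) • ((Ideal.Quotient.mk I (MvPolynomial.X l)) • t) := by
      rw [smul_eq_mul, map_mul, ← smul_smul]
    rw [h2]
    exact Submodule.smul_mem _ _ (hXB t ht l)
  obtain ⟨gb, hgbs, hgb⟩ := hmod
  have hfPi : (fun S => auxPi I e (f S)) = f := funext fun S => by
    obtain ⟨g, hg, hfs⟩ := hhom S
    rw [hfs]
    exact auxPi_homog hI hg
  refine ⟨fun S => auxPi I (e - 1) (gb S), fun S hS => by
    show auxPi I (e - 1) (gb S) = 0
    rw [show gb S = 0 from hgbs S hS, auxPi_zero hI], ?_⟩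
  have hsplit : f = (∑ t ∈ T p, κ t • t) + kosDiff I gb := by
    have : kosDiff I gb = f - ∑ t ∈ T p, κ t • t := hgb
    rw [this]; ring
  have hzero : ∀ S, auxPi I e ((∑ t ∈ T p, κ t • t) S) = 0 := by
    intro S
    rw [Finset.sum_apply]
    rw [show auxPi I e = auxPiHom hI e from rfl, map_sum]
    refine Finset.sum_eq_zero fun t ht => ?_
    show auxPi I e (κ t • t S) = 0
    have h1 : κ t • t S = Ideal.Quotient.mk I
        (MvPolynomial.C (constantCoeff (auxL I (c t))) * auxL I (t S)) := by
      rw [smul_eq_mul, map_mul, auxL_spec]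
    rw [h1, auxPi_mk hI, homogeneousComponent_C_mul]
    have h2 : (auxL I (t S)).totalDegree < e := by
      have h3 : (auxL I (t S)).totalDegree ≤ Dp p :=
        le_trans (Finset.le_sup (f := fun S : Finset (Fin N) => (auxL I (t S)).totalDegree)
            (Finset.mem_univ S))
          (Finset.le_sup (f := fun t => Finset.univ.sup
            (fun S : Finset (Fin N) => (auxL I (t S)).totalDegree)) ht)
      have h4 : Dp p ≤ D := Finset.le_sup (Finset.mem_range.2 (by omega))
      omega
    rw [homogeneousComponent_eq_zero _ _ h2, mul_zero, map_zero]
  calc f = (fun S => auxPi I e (f S)) := hfPi.symm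
    _ = fun S => auxPi I e ((∑ t ∈ T p, κ t • t) S) + auxPi I e (kosDiff I gb S) := by
        funext S
        rw [← auxPi_add hI]
        congr 1
        rw [hsplit]; rfl
    _ = fun S => auxPi I ((e - 1) + 1) (kosDiff I gb S) := by
        funext S
        rw [hzero S, zero_add]
        congr 1
        omega
    _ = kosDiff I (fun S => auxPi I (e - 1) (gb S)) := auxPi_kos hI (e - 1) gb

lemma auxBettiBound (I : Ideal (PolyRing k N))
    (hI : ∀ g ∈ I, ∀ e : ℕ, homogeneousComponent e g ∈ I) :
    ∃ D : ℕ, ∀ p μ : ℕ, BettiNonzero I p μ → (μ : ℤ) - p ≤ D := by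
  obtain ⟨D, hD⟩ := auxVanish I hI
  refine ⟨D, fun p μ hB => ?_⟩
  obtain ⟨hpμ, f, h1, h2, h3, h4, h5⟩ := hB
  by_contra hcon
  push_neg at hcon
  exact h5 (hD p μ f h1 h2 h3 (by omega))

end Stmt15Aux


lemma auxAntisym {M : Type} [AddCommGroup M] (F : Fin N → Fin N → M)
    (hF : ∀ i j : Fin N, i ≠ j → F j i = - F i j) :
    ∑ j : Fin N, ∑ i ∈ ({j} : Finset (Fin N))ᶜ, F j i = 0 := by
  classical
  have h1 : ∀ j : Fin N, ∑ i ∈ ({j} : Finset (Fin N))ᶜ, F j i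
      = ∑ i : Fin N, if i ≠ j then F j i else 0 := by
    intro j
    rw [← Finset.sum_filter]
    congr 1
    ext x
    simp
  simp_rw [h1]
  rw [← Fintype.sum_prod_type']
  rw [show (∑ p : Fin N × Fin N, if p.2 ≠ p.1 then F p.1 p.2 else 0)
      = ∑ p ∈ Finset.univ.filter (fun p : Fin N × Fin N => p.2 ≠ p.1), F p.1 p.2 by
    rw [Finset.sum_filter]]
  refine Finset.sum_involution (fun p _ => (p.2, p.1)) ?_ ?_ ?_ ?_
  · intro p hp
    have hne : p.2 ≠ p.1 := (Finset.mem_filter.1 hp).2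
    show F p.1 p.2 + F p.2 p.1 = 0
    rw [hF p.1 p.2 (Ne.symm hne)]
    exact add_neg_cancel _
  · intro p hp _
    have hne : p.2 ≠ p.1 := (Finset.mem_filter.1 hp).2
    intro hcon
    exact hne (congrArg Prod.fst hcon)
  · intro p hp
    have hne : p.2 ≠ p.1 := (Finset.mem_filter.1 hp).2
    exact Finset.mem_filter.2 ⟨Finset.mem_univ _, fun h => hne h.symm⟩
  · intro p hp
    rfl

lemma auxKerStable (m n : ℕ) (hn : 1 ≤ n) (φ : PolyRing k (m + 3) →ₐ[k] PolyRing k 2)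
    (hφ : φ = MvPolynomial.aeval (fun j : Fin (m + 3) =>
      if (j : ℕ) = 0 then MvPolynomial.X 0 ^ ((n + 1) ^ m)
      else if (j : ℕ) = 1 then
        MvPolynomial.X 0 ^ ((n + 1) ^ m - 1) * MvPolynomial.X 1
      else
        MvPolynomial.X 0 ^ ((n + 1) ^ m
            - n ^ (m + 2 - (j : ℕ)) * (n + 1) ^ ((j : ℕ) - 2))
          * MvPolynomial.X 1 ^ (n ^ (m + 2 - (j : ℕ)) * (n + 1) ^ ((j : ℕ) - 2)))) :
    ∀ g ∈ RingHom.ker φ.toRingHom, ∀ e : ℕ,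
      homogeneousComponent e g ∈ RingHom.ker φ.toRingHom := by
  set c := (n + 1) ^ m with hcdef
  have hc1 : 1 ≤ c := Nat.one_le_pow _ _ (by omega)
  set F : Fin (m + 3) → PolyRing k 2 := fun j =>
      if (j : ℕ) = 0 then MvPolynomial.X 0 ^ ((n + 1) ^ m)
      else if (j : ℕ) = 1 then
        MvPolynomial.X 0 ^ ((n + 1) ^ m - 1) * MvPolynomial.X 1
      else
        MvPolynomial.X 0 ^ ((n + 1) ^ m
            - n ^ (m + 2 - (j : ℕ)) * (n + 1) ^ ((j : ℕ) - 2))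
          * MvPolynomial.X 1 ^ (n ^ (m + 2 - (j : ℕ)) * (n + 1) ^ ((j : ℕ) - 2)) with hFdef
  have hFhom : ∀ j : Fin (m + 3), (F j).IsHomogeneous c := by
    intro j
    rw [hFdef]
    dsimp only
    by_cases h0 : (j : ℕ) = 0
    · rw [if_pos h0]
      exact isHomogeneous_X_pow _ _
    rw [if_neg h0]
    by_cases h1 : (j : ℕ) = 1
    · rw [if_pos h1]
      have := (isHomogeneous_X_pow (R := k) (0 : Fin 2) (c - 1)).mul
        (isHomogeneous_X k (1 : Fin 2))
      rwa [Nat.sub_add_cancel hc1] at this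
    rw [if_neg h1]
    have hj2 : 2 ≤ (j : ℕ) := by omega
    have hjle : (j : ℕ) ≤ m + 2 := by have := j.isLt; omega
    set q := n ^ (m + 2 - (j : ℕ)) * (n + 1) ^ ((j : ℕ) - 2) with hqdef
    have hq : q ≤ c := by
      calc q ≤ (n + 1) ^ (m + 2 - (j : ℕ)) * (n + 1) ^ ((j : ℕ) - 2) :=
            Nat.mul_le_mul_right _ (Nat.pow_le_pow_left (by omega) _)
        _ = (n + 1) ^ ((m + 2 - (j : ℕ)) + ((j : ℕ) - 2)) := (pow_add _ _ _).symm
        _ = c := by rw [hcdef]; congr 1; omega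
    have := (isHomogeneous_X_pow (R := k) (0 : Fin 2) (c - q)).mul
      (isHomogeneous_X_pow (R := k) (1 : Fin 2) q)
    rwa [Nat.sub_add_cancel hq] at this
  have hφhom : ∀ (e : ℕ) (g : PolyRing k (m + 3)), g.IsHomogeneous e →
      (φ g).IsHomogeneous (c * e) := by
    intro e g hg
    rw [hφ]
    exact hg.aeval _ hFhom
  intro g hg e
  rw [RingHom.mem_ker] at hg ⊢
  by_cases he : g.totalDegree < e
  · rw [homogeneousComponent_eq_zero _ _ he, map_zero]
  push_neg at he
  have h0 : ∑ i ∈ Finset.range (g.totalDegree + 1),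
      φ (homogeneousComponent i g) = 0 := by
    rw [← map_sum, sum_homogeneousComponent]
    exact hg
  have h1 := congrArg (homogeneousComponent (c * e)) h0
  rw [map_sum, map_zero] at h1
  rw [Finset.sum_eq_single e ?side1 ?side2] at h1
  case side1 =>
    intro i _ hie
    rw [homogeneousComponent_of_mem ((mem_homogeneousSubmodule _ _).2
      (hφhom i _ (homogeneousComponent_isHomogeneous i g)))]
    rw [if_neg (fun hh : c * e = c * i => hie
      ((Nat.eq_of_mul_eq_mul_left (by omega) hh)).symm)]
  case side2 =>
    intro hmem
    exact absurd (Finset.mem_range.2 (by omega)) hmem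
  rw [homogeneousComponent_of_mem ((mem_homogeneousSubmodule _ _).2
    (hφhom e _ (homogeneousComponent_isHomogeneous e g))), if_pos rfl] at h1
  exact h1

/-- The form `X_1^{n^m} - X_0^{n^m - 1} X_2` lies in the defining prime ideal
`b'_{m,n}` of the monomial curve `C'_{m,n}` (the kernel of
`X_0 ↦ s^{(n+1)^m}`, `X_1 ↦ s^{(n+1)^m - 1} t`,
`X_j ↦ s^{(n+1)^m - n^{m-j+2}(n+1)^{j-2}} t^{n^{m-j+2}(n+1)^{j-2}}`); and if it is
moreover a minimal generator of `b'_{m,n}`, then `reg b'_{m,n} ≥ n^m`. -/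
theorem stmt15 {k : Type} [Field k] (m n : ℕ) (hm : 1 ≤ m) (hn : 1 ≤ n)
    (φ : PolyRing k (m + 3) →ₐ[k] PolyRing k 2)
    (hφ : φ = MvPolynomial.aeval (fun j : Fin (m + 3) =>
      if (j : ℕ) = 0 then MvPolynomial.X 0 ^ ((n + 1) ^ m)
      else if (j : ℕ) = 1 then
        MvPolynomial.X 0 ^ ((n + 1) ^ m - 1) * MvPolynomial.X 1
      else
        MvPolynomial.X 0 ^ ((n + 1) ^ m
            - n ^ (m + 2 - (j : ℕ)) * (n + 1) ^ ((j : ℕ) - 2))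
          * MvPolynomial.X 1 ^ (n ^ (m + 2 - (j : ℕ)) * (n + 1) ^ ((j : ℕ) - 2))))
    (b' : Ideal (PolyRing k (m + 3))) (hb' : b' = RingHom.ker φ.toRingHom)
    (G : PolyRing k (m + 3))
    (hG : G = MvPolynomial.X (⟨1, by omega⟩ : Fin (m + 3)) ^ (n ^ m)
      - MvPolynomial.X (⟨0, by omega⟩ : Fin (m + 3)) ^ (n ^ m - 1)
        * MvPolynomial.X (⟨2, by omega⟩ : Fin (m + 3))) :
    G ∈ b' ∧ (G ∉ irrel k (m + 3) * b' → ((n ^ m : ℕ) : ℤ) ≤ regIdeal b') := by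
  classical
  set d := n ^ m with hddef
  set c := (n + 1) ^ m with hcdef
  have hd1 : 1 ≤ d := Nat.one_le_pow _ _ (by omega)
  have hc1 : 1 ≤ c := Nat.one_le_pow _ _ (by omega)
  have hdc : d ≤ c := Nat.pow_le_pow_left (by omega) m
  set i0 : Fin (m + 3) := ⟨0, by omega⟩ with hi0
  set i1 : Fin (m + 3) := ⟨1, by omega⟩ with hi1
  set i2 : Fin (m + 3) := ⟨2, by omega⟩ with hi2
  have hG' : G = MvPolynomial.X i1 ^ d - MvPolynomial.X i0 ^ (d - 1) * MvPolynomial.X i2 := hG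
  have hi12 : i1 ≠ i2 := Fin.ne_of_val_ne (by norm_num)
  have hφ0 : φ (MvPolynomial.X i0) = MvPolynomial.X 0 ^ c := by
    rw [hφ, aeval_X, show ((i0 : Fin (m + 3)) : ℕ) = 0 from rfl]
    norm_num
  have hφ1 : φ (MvPolynomial.X i1) = MvPolynomial.X 0 ^ (c - 1) * MvPolynomial.X 1 := by
    rw [hφ, aeval_X, show ((i1 : Fin (m + 3)) : ℕ) = 1 from rfl]
    norm_num
  have hφ2 : φ (MvPolynomial.X i2) = MvPolynomial.X 0 ^ (c - d) * MvPolynomial.X 1 ^ d := by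
    rw [hφ, aeval_X, show ((i2 : Fin (m + 3)) : ℕ) = 2 from rfl]
    norm_num [Nat.add_sub_cancel]
    rfl
  have hGb : G ∈ b' := by
    rw [hb', RingHom.mem_ker]
    show φ G = 0
    rw [hG', map_sub, map_pow, map_mul, map_pow, hφ1, hφ0, hφ2]
    rw [mul_pow, ← pow_mul, ← pow_mul, ← mul_assoc, ← pow_add]
    have e1 : (c - 1) * d = c * d - d := by rw [Nat.sub_mul, one_mul]
    have e2 : c * (d - 1) = c * d - c := by rw [Nat.mul_sub, mul_one]
    have hcP : c ≤ c * d := Nat.le_mul_of_pos_right c (by omega)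
    have key : (c - 1) * d = c * (d - 1) + (c - d) := by omega
    rw [key, sub_self]
  refine ⟨hGb, ?_⟩
  intro hGirr
  have hI : ∀ g ∈ b', ∀ e : ℕ, homogeneousComponent e g ∈ b' := by
    rw [hb']; exact auxKerStable m n hn φ hφ
  set fw : Finset (Fin (m + 3)) → PolyRing k (m + 3) ⧸ b' := fun S =>
    if S = {i1} then Ideal.Quotient.mk b' (MvPolynomial.X i1 ^ (d - 1))
    else if S = {i2} then Ideal.Quotient.mk b' (-(MvPolynomial.X i0 ^ (d - 1))) else 0 with hfw
  have hfw1 : fw {i1} = Ideal.Quotient.mk b' (MvPolynomial.X i1 ^ (d - 1)) := by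
    simp only [hfw, if_pos rfl]
  have hfw2 : fw {i2} = Ideal.Quotient.mk b' (-(MvPolynomial.X i0 ^ (d - 1))) := by
    simp only [hfw]
    rw [if_neg (fun h => hi12 (Finset.singleton_inj.1 h).symm)]
    simp
  have hfwo : ∀ S, S ≠ {i1} → S ≠ {i2} → fw S = 0 := by
    intro S h1 h2
    simp only [hfw, if_neg h1, if_neg h2]
  have hGrep : MvPolynomial.X i1 * MvPolynomial.X i1 ^ (d - 1)
      + MvPolynomial.X i2 * (-(MvPolynomial.X i0 ^ (d - 1))) = G := by
    rw [hG']
    have hdd : d - 1 + 1 = d := by omega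
    have h1 : (MvPolynomial.X i1 : PolyRing k (m + 3)) ^ d
        = MvPolynomial.X i1 * MvPolynomial.X i1 ^ (d - 1) := by
      conv_lhs => rw [← hdd]
      rw [pow_succ']
    rw [h1]
    ring
  have hBetti : BettiNonzero b' 1 d := by
    refine ⟨hd1, fw, ?_, ?_, ?_, ?_, ?_⟩
    · -- supported
      intro S hS
      refine hfwo S (fun h => hS ?_) (fun h => hS ?_) <;> rw [h, Finset.card_singleton]
    · -- homogeneous chain
      intro S
      by_cases h1 : S = {i1}
      · exact ⟨MvPolynomial.X i1 ^ (d - 1), isHomogeneous_X_pow _ _, by rw [h1, hfw1]⟩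
      by_cases h2 : S = {i2}
      · exact ⟨-(MvPolynomial.X i0 ^ (d - 1)), (isHomogeneous_X_pow _ _).neg,
          by rw [h2, hfw2]⟩
      · exact ⟨0, isHomogeneous_zero _ _ _, by rw [hfwo S h1 h2, map_zero]⟩
    · -- cycle
      funext S
      rw [show kosDiff b' fw S = ∑ j ∈ Sᶜ,
        (((-1 : PolyRing k (m + 3)) ^ (S.filter (· < j)).card * MvPolynomial.X j) •
          fw (insert j S)) from rfl, Pi.zero_apply]
      by_cases hSe : S = ∅
      · subst hSe
        rw [Finset.compl_empty]
        have hterm : ∀ j : Fin (m + 3),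
            (((-1 : PolyRing k (m + 3)) ^ ((∅ : Finset (Fin (m + 3))).filter (· < j)).card
              * MvPolynomial.X j) • fw (insert j ∅))
            = (MvPolynomial.X j : PolyRing k (m + 3)) • fw {j} := by
          intro j
          rw [Finset.filter_empty, Finset.card_empty, pow_zero, one_mul]
          rfl
        rw [Finset.sum_congr rfl fun j _ => hterm j]
        have hvan : ∀ j ∈ (Finset.univ : Finset (Fin (m + 3))),
            j ∉ ({i1, i2} : Finset (Fin (m + 3))) →
            (MvPolynomial.X j : PolyRing k (m + 3)) • fw {j} = 0 := by
          intro j _ hj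
          have hj1 : j ≠ i1 := fun hx => hj (by rw [hx]; exact Finset.mem_insert_self _ _)
          have hj2 : j ≠ i2 := fun hx => hj
            (by rw [hx]; exact Finset.mem_insert_of_mem (Finset.mem_singleton_self _))
          rw [hfwo {j} (fun hx => hj1 (Finset.singleton_inj.1 hx))
            (fun hx => hj2 (Finset.singleton_inj.1 hx)), smul_zero]
        rw [← Finset.sum_subset (Finset.subset_univ ({i1, i2} : Finset (Fin (m + 3)))) hvan]
        rw [Finset.sum_pair hi12, hfw1, hfw2]
        rw [show (MvPolynomial.X i1 : PolyRing k (m + 3)) •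
            Ideal.Quotient.mk b' (MvPolynomial.X i1 ^ (d - 1))
          = Ideal.Quotient.mk b' (MvPolynomial.X i1 * MvPolynomial.X i1 ^ (d - 1)) from rfl]
        rw [show (MvPolynomial.X i2 : PolyRing k (m + 3)) •
            Ideal.Quotient.mk b' (-(MvPolynomial.X i0 ^ (d - 1)))
          = Ideal.Quotient.mk b' (MvPolynomial.X i2 * (-(MvPolynomial.X i0 ^ (d - 1)))) from rfl]
        rw [← map_add, hGrep]
        exact Ideal.Quotient.eq_zero_iff_mem.2 hGb
      · refine Finset.sum_eq_zero fun j hj => ?_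
        have hjS : j ∉ S := Finset.mem_compl.1 hj
        have hcard : ∀ x : Fin (m + 3), insert j S ≠ ({x} : Finset (Fin (m + 3))) := by
          intro x h
          have h1 : (insert j S).card = S.card + 1 := Finset.card_insert_of_notMem hjS
          rw [h, Finset.card_singleton] at h1
          exact hSe (Finset.card_eq_zero.1 (by omega))
        rw [hfwo _ (hcard i1) (hcard i2), smul_zero]
    · -- nonzero
      intro h0
      have h1 := congrFun h0 {i1}
      rw [hfw1, Pi.zero_apply, Ideal.Quotient.eq_zero_iff_mem, hb', RingHom.mem_ker] at h1
      have h2 : φ (MvPolynomial.X i1 ^ (d - 1)) = 0 := h1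
      rw [map_pow, hφ1] at h2
      exact pow_ne_zero _ (mul_ne_zero (pow_ne_zero _ (MvPolynomial.X_ne_zero _))
        (MvPolynomial.X_ne_zero _)) h2
    · -- not a boundary
      rintro ⟨g, hgsupp, hfg⟩
      apply hGirr
      set hl : Finset (Fin (m + 3)) → PolyRing k (m + 3) := fun T => auxL b' (g T) with hhl
      set w : Fin (m + 3) → PolyRing k (m + 3) := fun j =>
        if j = i1 then MvPolynomial.X i1 ^ (d - 1)
        else if j = i2 then -(MvPolynomial.X i0 ^ (d - 1)) else 0 with hwdef
      have hw : ∀ j, Ideal.Quotient.mk b' (w j) = fw {j} := by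
        intro j
        by_cases h1 : j = i1
        · rw [hwdef]; simp only
          rw [if_pos h1, h1, hfw1]
        by_cases h2 : j = i2
        · rw [hwdef]; simp only
          rw [if_neg h1, if_pos h2, h2, hfw2]
        · rw [hwdef]; simp only
          rw [if_neg h1, if_neg h2, map_zero,
            hfwo {j} (fun hx => h1 (Finset.singleton_inj.1 hx))
              (fun hx => h2 (Finset.singleton_inj.1 hx))]
      set Sg : Fin (m + 3) → PolyRing k (m + 3) := fun j =>
        ∑ i ∈ ({j} : Finset (Fin (m + 3)))ᶜ,
          ((-1 : PolyRing k (m + 3)) ^ (({j} : Finset (Fin (m + 3))).filter (· < i)).card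
            * MvPolynomial.X i * hl (insert i {j})) with hSgdef
      have hSgmk : ∀ j, Ideal.Quotient.mk b' (Sg j) = kosDiff b' g {j} := by
        intro j
        rw [hSgdef]
        simp only [hhl]
        rw [map_sum]
        exact Finset.sum_congr rfl fun i _ => by
          conv_rhs => rw [← auxL_spec b' (g (insert i ({j} : Finset (Fin (m + 3)))))]
          exact map_mul _ _ _
      have hbj : ∀ j, w j - Sg j ∈ b' := by
        intro j
        rw [← Ideal.Quotient.eq]
        rw [hw j, hSgmk j, hfg]
      have hGsum : G = ∑ j : Fin (m + 3), MvPolynomial.X j * w j := by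
        have hvan : ∀ j ∈ (Finset.univ : Finset (Fin (m + 3))),
            j ∉ ({i1, i2} : Finset (Fin (m + 3))) →
            MvPolynomial.X j * w j = 0 := by
          intro j _ hj
          have hj1 : j ≠ i1 := fun hx => hj (by rw [hx]; exact Finset.mem_insert_self _ _)
          have hj2 : j ≠ i2 := fun hx => hj
            (by rw [hx]; exact Finset.mem_insert_of_mem (Finset.mem_singleton_self _))
          rw [hwdef]
          simp only
          rw [if_neg hj1, if_neg hj2, mul_zero]
        rw [← Finset.sum_subset (Finset.subset_univ ({i1, i2} : Finset (Fin (m + 3)))) hvan]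
        rw [Finset.sum_pair hi12]
        have hw1 : w i1 = MvPolynomial.X i1 ^ (d - 1) := by simp [hwdef]
        have hw2 : w i2 = -(MvPolynomial.X i0 ^ (d - 1)) := by simp [hwdef, Ne.symm hi12]
        rw [hw1, hw2, ← hGrep]
      have hanti : ∑ j : Fin (m + 3), MvPolynomial.X j * Sg j = 0 := by
        rw [show (fun j : Fin (m + 3) => MvPolynomial.X j * Sg j)
            = fun j : Fin (m + 3) => ∑ i ∈ ({j} : Finset (Fin (m + 3)))ᶜ,
              MvPolynomial.X j * ((-1 : PolyRing k (m + 3))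
                  ^ (({j} : Finset (Fin (m + 3))).filter (· < i)).card
                * MvPolynomial.X i * hl (insert i {j})) by
          funext j
          rw [hSgdef]
          simp only
          rw [Finset.mul_sum]]
        refine auxAntisym _ ?_
        intro a b hab
        have hpair : insert a ({b} : Finset (Fin (m + 3))) = insert b ({a} : Finset (Fin (m + 3))) :=
          Finset.pair_comm a b
        rcases hab.lt_or_gt with hlt | hlt
        · rw [Finset.filter_singleton, Finset.filter_singleton,
            if_neg (fun hc : b < a => absurd (lt_trans hc hlt) (lt_irrefl _)), if_pos hlt, hpair]
          simp only [Finset.card_empty, Finset.card_singleton, pow_zero, pow_one]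
          ring
        · rw [Finset.filter_singleton, Finset.filter_singleton,
            if_pos hlt, if_neg (fun hc : a < b => absurd (lt_trans hc hlt) (lt_irrefl _)), hpair]
          simp only [Finset.card_empty, Finset.card_singleton, pow_zero, pow_one]
          ring
      have hGdecomp : G = ∑ j : Fin (m + 3), MvPolynomial.X j * (w j - Sg j) := by
        calc G = ∑ j : Fin (m + 3), MvPolynomial.X j * w j := hGsum
          _ = ∑ j : Fin (m + 3), (MvPolynomial.X j * (w j - Sg j) + MvPolynomial.X j * Sg j) :=
            Finset.sum_congr rfl fun j _ => by ring
          _ = (∑ j : Fin (m + 3), MvPolynomial.X j * (w j - Sg j))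
              + ∑ j : Fin (m + 3), MvPolynomial.X j * Sg j := Finset.sum_add_distrib
          _ = ∑ j : Fin (m + 3), MvPolynomial.X j * (w j - Sg j) := by rw [hanti, add_zero]
      rw [hGdecomp]
      exact Ideal.sum_mem _ fun j _ => Ideal.mul_mem_mul (Ideal.subset_span ⟨j, rfl⟩) (hbj j)
  obtain ⟨D, hD⟩ := auxBettiBound b' hI
  have hmem : ((d : ℤ) - 1) ∈ {r : ℤ | ∃ p μ, BettiNonzero b' p μ ∧ r = (μ : ℤ) - p} :=
    ⟨1, d, hBetti, by norm_num⟩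
  have hbdd : BddAbove {r : ℤ | ∃ p μ, BettiNonzero b' p μ ∧ r = (μ : ℤ) - p} := by
    refine ⟨(D : ℤ), ?_⟩
    rintro r ⟨p, μ, hB, rfl⟩
    exact hD p μ hB
  have hle := le_csSup hbdd hmem
  rw [regIdeal, regQuot]
  have : (1 : ℤ) ≤ d := by exact_mod_cast hd1
  linarith
end
end
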